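/- Let U₁,…,Uₙ, U be d-dimensional random vectors with ‖Uₙ‖_∞ ≤ ξₙ almost surely, suppose ‖U‖_∞ has a finite fourth moment, and let V be a random variable with E[exp(ς|V|)] < ∞ for some ς > 0. Set γₙ = E‖Uₙ − U‖₂². Then for all n ≥ 2, E(‖Uₙ − U‖₂²·|V|) ≤ (4/ς)·γₙ·log n + C·d·(ξₙ² + 1)/n, where C is a constant depending only on E‖U‖_∞⁴, E[exp(ς|V|)] and ς. -/

import Mathlib

open MeasureTheory

/-!
Split according to whether |V| exceeds ι = (4/ς) log n. Below ι the weight |V| is at most ι,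
which gives the term (4/ς) γₙ log n. Above it, |V| ≤ (4/ς) e^{ς|V|/4} and n ≤ e^{ς|V|/4}, so
|V| ≤ (4/(ςn)) e^{ς|V|/2}; the product ‖Uₙ − U‖₂² e^{ς|V|/2} is then bounded by AM-GM by
d((2ξₙ² + 1) e^{ς|V|} + ‖U‖_∞⁴), whose expectation is O(d(ξₙ² + 1)).
-/

lemma le_four_div_mul_log_add_exp_half {ς x : ℝ} (hς : 0 < ς) (hx : 1 ≤ x) (v : ℝ) :
    v ≤ 4 / ς * Real.log x + 4 / (ς * x) * Real.exp (ς * v / 2) := by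
  have hx₀ : 0 < x := by linarith
  have hι : 0 ≤ 4 / ς * Real.log x := by have := Real.log_nonneg hx; positivity
  rcases le_or_gt v (4 / ς * Real.log x) with hv | hv
  · have : 0 ≤ 4 / (ς * x) * Real.exp (ς * v / 2) := by positivity
    linarith
  · have hlog : Real.log x ≤ ς * v / 4 := by
      rw [div_mul_eq_mul_div, div_lt_iff₀ hς] at hv
      linarith
    have hx_le : x ≤ Real.exp (ς * v / 4) := by
      simpa [Real.exp_log hx₀] using Real.exp_le_exp.2 hlog
    have hv_le : v ≤ 4 / ς * Real.exp (ς * v / 4) := by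
      have := Real.add_one_le_exp (ς * v / 4)
      calc v = 4 / ς * (ς * v / 4) := by field_simp
        _ ≤ 4 / ς * Real.exp (ς * v / 4) := by gcongr; linarith
    calc v = v * x / x := by field_simp
      _ ≤ 4 / ς * Real.exp (ς * v / 4) * Real.exp (ς * v / 4) / x := by gcongr
      _ = 4 / (ς * x) * Real.exp (ς * v / 2) := by
          rw [mul_assoc, ← Real.exp_add]; field_simp; ring_nf
      _ ≤ _ := by linarith

lemma sum_sq_sub_le_two_mul_card {ι : Type*} [Fintype ι] (x y : ι → ℝ) :
    ∑ i, (x i - y i) ^ 2 ≤ 2 * Fintype.card ι * (‖x‖ ^ 2 + ‖y‖ ^ 2) := by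
  have hterm (i : ι) : (x i - y i) ^ 2 ≤ 2 * (‖x‖ ^ 2 + ‖y‖ ^ 2) := by
    have hx : x i ^ 2 ≤ ‖x‖ ^ 2 := by
      have h := norm_le_pi_norm x i
      rw [Real.norm_eq_abs] at h
      nlinarith [sq_abs (x i), abs_nonneg (x i)]
    have hy : y i ^ 2 ≤ ‖y‖ ^ 2 := by
      have h := norm_le_pi_norm y i
      rw [Real.norm_eq_abs] at h
      nlinarith [sq_abs (y i), abs_nonneg (y i)]
    nlinarith [sq_nonneg (x i + y i)]
  calc ∑ i, (x i - y i) ^ 2 ≤ ∑ _i : ι, 2 * (‖x‖ ^ 2 + ‖y‖ ^ 2) :=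
        Finset.sum_le_sum fun i _ => hterm i
    _ = 2 * Fintype.card ι * (‖x‖ ^ 2 + ‖y‖ ^ 2) := by
        rw [Finset.sum_const, Finset.card_univ, nsmul_eq_mul]; ring

lemma sum_sq_sub_mul_exp_half_le {ι : Type*} [Fintype ι] {x y : ι → ℝ} {ξ t : ℝ}
    (hx : ‖x‖ ≤ ξ) (ht : 0 ≤ t) :
    (∑ i, (x i - y i) ^ 2) * Real.exp (t / 2) ≤
      Fintype.card ι * ((2 * ξ ^ 2 + 1) * Real.exp t + ‖y‖ ^ 4) := by
  set e := Real.exp (t / 2)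
  have he_sq : e ^ 2 = Real.exp t := by rw [← Real.exp_nat_mul]; ring_nf
  have he : 1 ≤ e := Real.one_le_exp (by positivity)
  have hξ : ‖x‖ ^ 2 ≤ ξ ^ 2 := pow_le_pow_left₀ (norm_nonneg x) hx 2
  have hk : (0 : ℝ) ≤ Fintype.card ι := Nat.cast_nonneg _
  -- e ≤ e² since e ≥ 1, and AM-GM: 2‖y‖²e ≤ ‖y‖⁴ + e²
  have hamgm : 2 * (ξ ^ 2 + ‖y‖ ^ 2) * e ≤ (2 * ξ ^ 2 + 1) * e ^ 2 + ‖y‖ ^ 4 := by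
    nlinarith [sq_nonneg (‖y‖ ^ 2 - e), mul_le_mul_of_nonneg_left (by nlinarith : e ≤ e ^ 2)
      (sq_nonneg ξ)]
  calc (∑ i, (x i - y i) ^ 2) * e ≤ 2 * Fintype.card ι * (ξ ^ 2 + ‖y‖ ^ 2) * e := by
        gcongr
        exact (sum_sq_sub_le_two_mul_card x y).trans (by gcongr)
    _ ≤ Fintype.card ι * ((2 * ξ ^ 2 + 1) * Real.exp t + ‖y‖ ^ 4) := by
        rw [← he_sq]; nlinarith [mul_le_mul_of_nonneg_left hamgm hk]

lemma integral_mul_abs_le_of_mul_exp_half_le {Ω : Type*} [MeasurableSpace Ω] {μ : Measure Ω}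
    {S G V : Ω → ℝ} {ς x : ℝ} (hς : 0 < ς) (hx : 1 ≤ x) (hS : 0 ≤ S)
    (hSi : Integrable S μ) (hGi : Integrable G μ)
    (hSG : ∀ᵐ ω ∂μ, S ω * Real.exp (ς * |V ω| / 2) ≤ G ω) :
    ∫ ω, S ω * |V ω| ∂μ ≤
      4 / ς * Real.log x * ∫ ω, S ω ∂μ + 4 / (ς * x) * ∫ ω, G ω ∂μ := by
  have hpt : ∀ᵐ ω ∂μ, S ω * |V ω| ≤ 4 / ς * Real.log x * S ω + 4 / (ς * x) * G ω := by
    filter_upwards [hSG] with ω hω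
    have hx₀ : 0 < x := by linarith
    calc S ω * |V ω|
        ≤ S ω * (4 / ς * Real.log x + 4 / (ς * x) * Real.exp (ς * |V ω| / 2)) :=
          mul_le_mul_of_nonneg_left (le_four_div_mul_log_add_exp_half hς hx _) (hS ω)
      _ = 4 / ς * Real.log x * S ω + 4 / (ς * x) * (S ω * Real.exp (ς * |V ω| / 2)) := by ring
      _ ≤ _ := by gcongr
  calc ∫ ω, S ω * |V ω| ∂μ ≤ ∫ ω, (4 / ς * Real.log x * S ω + 4 / (ς * x) * G ω) ∂μ :=
        integral_mono_of_nonneg (.of_forall fun ω => mul_nonneg (hS ω) (abs_nonneg _))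
          ((hSi.const_mul _).add (hGi.const_mul _)) hpt
    _ = _ := by rw [integral_add (hSi.const_mul _) (hGi.const_mul _), integral_const_mul,
        integral_const_mul]

theorem sub_exp_weighted_convergence_general {Ω : Type*} [MeasurableSpace Ω]
    (μ : Measure Ω) [IsProbabilityMeasure μ] (d : ℕ)
    (U : ℕ → Ω → (Fin d → ℝ)) (Ulim : Ω → (Fin d → ℝ)) (V : Ω → ℝ)
    (ξ : ℕ → ℝ) (ς : ℝ) (hς : 0 < ς)
    (hUm : ∀ n, Measurable (U n)) (hUlimm : Measurable Ulim)
    (hbound : ∀ n, ∀ᵐ ω ∂μ, ‖U n ω‖ ≤ ξ n)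
    (hU4 : Integrable (fun ω => ‖Ulim ω‖ ^ 4) μ)
    (hV : Integrable (fun ω => Real.exp (ς * |V ω|)) μ) :
    ∃ C : ℝ, ∀ n : ℕ, 2 ≤ n →
      ∫ ω, (∑ i, (U n ω i - Ulim ω i) ^ 2) * |V ω| ∂μ ≤
        (4 / ς) * (∫ ω, ∑ i, (U n ω i - Ulim ω i) ^ 2 ∂μ) * Real.log n +
          C * d * (ξ n ^ 2 + 1) / n := by
  set A := ∫ ω, Real.exp (ς * |V ω|) ∂μ
  set B := ∫ ω, ‖Ulim ω‖ ^ 4 ∂μ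
  refine ⟨4 / ς * (2 * A + B), fun n hn => ?_⟩
  set S : Ω → ℝ := fun ω => ∑ i, (U n ω i - Ulim ω i) ^ 2
  set G : Ω → ℝ := fun ω => d * ((2 * ξ n ^ 2 + 1) * Real.exp (ς * |V ω|) + ‖Ulim ω‖ ^ 4)
  have hn₁ : (1 : ℝ) ≤ n := by exact_mod_cast (by omega : 1 ≤ n)
  have hS : 0 ≤ S := fun ω => Finset.sum_nonneg fun i _ => sq_nonneg _
  have hSG : ∀ᵐ ω ∂μ, S ω * Real.exp (ς * |V ω| / 2) ≤ G ω := by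
    filter_upwards [hbound n] with ω hω
    simpa [mul_div_assoc] using sum_sq_sub_mul_exp_half_le (y := Ulim ω) hω
      (by positivity : 0 ≤ ς * |V ω|)
  have hGi : Integrable G μ := ((hV.const_mul _).add hU4).const_mul _
  have hSi : Integrable S μ := by
    refine hGi.mono' (by fun_prop) ?_
    filter_upwards [hSG] with ω hω
    rw [Real.norm_eq_abs, abs_of_nonneg (hS ω)]
    exact (le_mul_of_one_le_right (hS ω) (Real.one_le_exp (by positivity))).trans hω
  have hGint : ∫ ω, G ω ∂μ = d * ((2 * ξ n ^ 2 + 1) * A + B) := by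
    rw [integral_const_mul, integral_add (hV.const_mul _) hU4, integral_const_mul]
  calc ∫ ω, S ω * |V ω| ∂μ
      ≤ 4 / ς * Real.log n * ∫ ω, S ω ∂μ + 4 / (ς * n) * ∫ ω, G ω ∂μ :=
        integral_mul_abs_le_of_mul_exp_half_le hς hn₁ hS hSi hGi hSG
    _ = 4 / ς * (∫ ω, S ω ∂μ) * Real.log n + 4 / ς * (d * ((2 * ξ n ^ 2 + 1) * A + B)) / n := by
        rw [hGint]; ring
    _ ≤ 4 / ς * (∫ ω, S ω ∂μ) * Real.log n + 4 / ς * ((2 * A + B) * d * (ξ n ^ 2 + 1)) / n := by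
        have hA : 0 ≤ A := integral_nonneg fun ω => (Real.exp_pos _).le
        have hB : 0 ≤ B := integral_nonneg fun ω => by positivity
        gcongr _ + 4 / ς * ?_ / _
        nlinarith [mul_nonneg hB (sq_nonneg (ξ n)), Nat.cast_nonneg (α := ℝ) d]
    _ = _ := by ring

/-- Lemma on multiplying a converging squared error by a sub-exponential weight:
if ‖Uₙ‖_∞ ≤ ξₙ a.s., ‖U‖_∞ has a finite fourth moment, and E exp(ς|V|) < ∞,
then with γₙ = E‖Uₙ − U‖₂² there is a constant C (independent of n) such that
for all n ≥ 2, E(‖Uₙ − U‖₂² |V|) ≤ (4/ς) γₙ log n + C d (ξₙ² + 1)/n. -/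
theorem sub_exp_weighted_convergence {Ω : Type*} [MeasurableSpace Ω]
    (μ : Measure Ω) [IsProbabilityMeasure μ] (d : ℕ)
    (U : ℕ → Ω → (Fin d → ℝ)) (Ulim : Ω → (Fin d → ℝ)) (V : Ω → ℝ)
    (ξ : ℕ → ℝ) (ς : ℝ) (hς : 0 < ς)
    (hUm : ∀ n, Measurable (U n)) (hUlimm : Measurable Ulim) (hVm : Measurable V)
    (hbound : ∀ n, ∀ᵐ ω ∂μ, ‖U n ω‖ ≤ ξ n)
    (hU4 : Integrable (fun ω => ‖Ulim ω‖ ^ 4) μ)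
    (hV : Integrable (fun ω => Real.exp (ς * |V ω|)) μ) :
    ∃ C : ℝ, ∀ n : ℕ, 2 ≤ n →
      ∫ ω, (∑ i, (U n ω i - Ulim ω i) ^ 2) * |V ω| ∂μ ≤
        (4 / ς) * (∫ ω, ∑ i, (U n ω i - Ulim ω i) ^ 2 ∂μ) * Real.log n +
          C * d * (ξ n ^ 2 + 1) / n :=
  sub_exp_weighted_convergence_general μ d U Ulim V ξ ς hς hUm hUlimm hbound hU4 hV
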